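/- arXiv:2605.10188 — 6 statements merged into one kernel-verified Lean document; each statement's English description precedes it below -/
import Mathlib

section
/- Let n be a finite index type, let T > 0, let x : ℝ → (n → ℝ) be continuously differentiable on [0,T], and let p be a multivariate polynomial over ℝ in the variables n. If p(x(0)) ≤ 0 and for every t ∈ [0,T] the chain-rule derivative ∑_{i ∈ n} (∂p/∂x_i)(x(t)) · x_i'(t) is ≤ 0, then p(x(T)) ≤ 0. -/
open MvPolynomial Set

theorem MvPolynomial.hasDerivWithinAt_eval {𝕜 σ : Type*} [NontriviallyNormedField 𝕜]
    [Fintype σ] {x : 𝕜 → σ → 𝕜} {x' : σ → 𝕜} {s : Set 𝕜} {t : 𝕜}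
    (hx : HasDerivWithinAt x x' s t) (p : MvPolynomial σ 𝕜) :
    HasDerivWithinAt (fun u => eval (x u) p) (∑ i, eval (x t) (pderiv i p) * x' i) s t := by
  classical
  induction p using MvPolynomial.induction_on with
  | C a =>
    simpa only [eval_C, pderiv_C, map_zero, zero_mul, Finset.sum_const_zero]
      using hasDerivWithinAt_const t s a
  | add p q hp hq =>
    simpa only [eval_add, map_add, add_mul, Finset.sum_add_distrib] using hp.fun_add hq
  | mul_X p i hp =>
    have hsum : ∑ j, eval (x t) (pderiv j (p * X i)) * x' j
        = (∑ j, eval (x t) (pderiv j p) * x' j) * x t i + eval (x t) p * x' i := by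
      simp only [pderiv_mul, pderiv_X, eval_add, eval_mul, eval_X, Pi.single_apply, add_mul,
        Finset.sum_add_distrib, Finset.sum_mul]
      simp [mul_right_comm]
    simpa only [eval_mul, eval_X, hsum] using hp.fun_mul (hasDerivWithinAt_pi.1 hx i)

theorem dI_le_sound_general
    {n : Type*} [Fintype n]
    (T : ℝ) (hT : 0 < T)
    (x : ℝ → n → ℝ) (hx : ContDiffOn ℝ 1 x (Set.Icc 0 T))
    (p : MvPolynomial n ℝ)
    (h0 : MvPolynomial.eval (x 0) p ≤ 0)
    (hder : ∀ t ∈ Set.Icc 0 T,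
      (∑ i, MvPolynomial.eval (x t) (MvPolynomial.pderiv i p) *
        derivWithin (fun s => x s i) (Set.Icc 0 T) t) ≤ 0) :
    MvPolynomial.eval (x T) p ≤ 0 := by
  have hp : ∀ t ∈ Icc 0 T, HasDerivWithinAt (fun s => eval (x s) p)
      (∑ i, eval (x t) (pderiv i p) * derivWithin (fun s => x s i) (Icc 0 T) t) (Icc 0 T) t :=
    fun t ht => hasDerivWithinAt_eval (x' := fun i => derivWithin (fun s => x s i) (Icc 0 T) t)
      (hasDerivWithinAt_pi.2 fun i =>
        (differentiableWithinAt_pi.1 (hx.differentiableOn_one t ht) i).hasDerivWithinAt) p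
  have hanti : AntitoneOn (fun s => eval (x s) p) (Icc 0 T) :=
    antitoneOn_of_hasDerivWithinAt_nonpos (convex_Icc 0 T)
      (fun t ht => (hp t ht).continuousWithinAt)
      (fun t ht => (hp t (interior_subset ht)).mono interior_subset)
      (fun t ht => hder t (interior_subset ht))
  exact (hanti (left_mem_Icc.2 hT.le) (right_mem_Icc.2 hT.le) hT.le).trans h0

/-- Soundness of the non-strict differential induction axiom (dI≤): if a
polynomial `p` is initially non-positive along a `C¹` trace `x` on `[0,T]` and
its chain-rule derivative is non-positive throughout, then `p(x T) ≤ 0`. -/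
theorem dI_le_sound
    {n : Type*} [Fintype n] [DecidableEq n]
    (T : ℝ) (hT : 0 < T)
    (x : ℝ → n → ℝ) (hx : ContDiffOn ℝ 1 x (Set.Icc 0 T))
    (p : MvPolynomial n ℝ)
    (h0 : MvPolynomial.eval (x 0) p ≤ 0)
    (hder : ∀ t ∈ Set.Icc 0 T,
      (∑ i, MvPolynomial.eval (x t) (MvPolynomial.pderiv i p) *
        derivWithin (fun s => x s i) (Set.Icc 0 T) t) ≤ 0) :
    MvPolynomial.eval (x T) p ≤ 0 :=
  dI_le_sound_general T hT x hx p h0 hder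
end

section
/- Let n be a finite index type, let T > 0, let x : ℝ → (n → ℝ) be continuously differentiable on [0,T], and let p be a multivariate polynomial over ℝ in the variables n. If p(x(0)) < 0 and for every t ∈ [0,T] the chain-rule derivative ∑_{i ∈ n} (∂p/∂x_i)(x(t)) · x_i'(t) is ≤ 0, then p(x(T)) < 0. -/
/-!
By induction on `p` (constants, sums, multiplication by a variable and the product rule),
`t ↦ p(x t)` has derivative `∑ i, ∂p/∂x_i (x t) * x_i' t` within `[0,T]`. A non-positive
derivative on the convex set `[0,T]` makes it antitone, so `p(x T) ≤ p(x 0) < 0`.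
-/

open MvPolynomial Set

theorem MvPolynomial.hasDerivWithinAt_eval_comp {𝕜 σ : Type*} [NontriviallyNormedField 𝕜]
    [Fintype σ] {x : 𝕜 → σ → 𝕜} {x' : σ → 𝕜} {s : Set 𝕜} {t : 𝕜}
    (hx : ∀ i, HasDerivWithinAt (fun u => x u i) (x' i) s t) (p : MvPolynomial σ 𝕜) :
    HasDerivWithinAt (fun u => eval (x u) p) (∑ i, eval (x t) (pderiv i p) * x' i) s t := by
  induction p using MvPolynomial.induction_on with
  | C a => simpa using hasDerivWithinAt_const t s a
  | add p q hp hq => simpa [add_mul, Finset.sum_add_distrib, Pi.add_def] using hp.add hq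
  | mul_X p i hp =>
    have hXi : ∑ j, eval (x t) (pderiv j (X i : MvPolynomial σ 𝕜)) * x' j = x' i := by
      rw [Finset.sum_eq_single i (fun j _ hj => by simp [pderiv_X_of_ne hj.symm]) (by simp)]
      simp
    have hderiv : ∑ j, eval (x t) (pderiv j (p * X i)) * x' j =
        (∑ j, eval (x t) (pderiv j p) * x' j) * x t i + eval (x t) p * x' i := by
      simp only [pderiv_mul, map_add, map_mul, eval_X, add_mul, Finset.sum_add_distrib,
        Finset.sum_mul]
      rw [← hXi, Finset.mul_sum]
      congr 1 <;> exact Finset.sum_congr rfl fun j _ => by ring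
    rw [hderiv]
    simpa [Pi.mul_def] using hp.mul (hx i)

theorem Convex.antitoneOn_of_hasDerivWithinAt_nonpos {D : Set ℝ} (hD : Convex ℝ D) {f f' : ℝ → ℝ}
    (hf : ∀ t ∈ D, HasDerivWithinAt f (f' t) D t) (hf'₀ : ∀ t ∈ D, f' t ≤ 0) :
    AntitoneOn f D :=
  _root_.antitoneOn_of_hasDerivWithinAt_nonpos hD (fun t ht => (hf t ht).continuousWithinAt)
    (fun t ht => (hf t (interior_subset ht)).mono interior_subset)
    (fun t ht => hf'₀ t (interior_subset ht))

theorem dI_lt_sound_general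
    {n : Type*} [Fintype n]
    (T : ℝ) (hT : 0 < T)
    (x : ℝ → n → ℝ) (hx : ContDiffOn ℝ 1 x (Set.Icc 0 T))
    (p : MvPolynomial n ℝ)
    (h0 : MvPolynomial.eval (x 0) p < 0)
    (hder : ∀ t ∈ Set.Icc 0 T,
      (∑ i, MvPolynomial.eval (x t) (MvPolynomial.pderiv i p) *
        derivWithin (fun s => x s i) (Set.Icc 0 T) t) ≤ 0) :
    MvPolynomial.eval (x T) p < 0 := by
  have hcoord : ∀ t ∈ Icc 0 T, ∀ i, HasDerivWithinAt (fun s => x s i)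
      (derivWithin (fun s => x s i) (Icc 0 T) t) (Icc 0 T) t := fun t ht i =>
    (differentiableWithinAt_pi.mp (hx.differentiableOn one_ne_zero t ht) i).hasDerivWithinAt
  have hanti : AntitoneOn (fun s => eval (x s) p) (Icc 0 T) :=
    (convex_Icc 0 T).antitoneOn_of_hasDerivWithinAt_nonpos
      (fun t ht => hasDerivWithinAt_eval_comp (hcoord t ht) p) hder
  exact (hanti (left_mem_Icc.2 hT.le) (right_mem_Icc.2 hT.le) hT.le).trans_lt h0

/-- Soundness of the strict differential induction axiom (dI<): if a
polynomial `p` is initially negative along a `C¹` trace `x` on `[0,T]` and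
its chain-rule derivative is non-positive throughout, then `p(x T) < 0`. -/
theorem dI_lt_sound
    {n : Type*} [Fintype n] [DecidableEq n]
    (T : ℝ) (hT : 0 < T)
    (x : ℝ → n → ℝ) (hx : ContDiffOn ℝ 1 x (Set.Icc 0 T))
    (p : MvPolynomial n ℝ)
    (h0 : MvPolynomial.eval (x 0) p < 0)
    (hder : ∀ t ∈ Set.Icc 0 T,
      (∑ i, MvPolynomial.eval (x t) (MvPolynomial.pderiv i p) *
        derivWithin (fun s => x s i) (Set.Icc 0 T) t) ≤ 0) :
    MvPolynomial.eval (x T) p < 0 :=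
  dI_lt_sound_general T hT x hx p h0 hder
end

section
/- Let n be a finite index type, let T > 0, let x : ℝ → (n → ℝ) be continuously differentiable on [0,T], and let p be a multivariate polynomial over ℝ in the variables n. If p(x(t)) = 0 for all t ∈ [0,T], then for all t ∈ [0,T] the chain-rule derivative vanishes: ∑_{i ∈ n} (∂p/∂x_i)(x(t)) · x_i'(t) = 0. -/
/-!
The syntactic differential `∑ i, ∂p/∂xᵢ (x t) * xᵢ'(t)` is the Fréchet derivative of
`v ↦ p(v)` at `x t` applied to `x'(t)`, so by the chain rule it is the derivative of
`t ↦ p(x t)` within `[0,T]`. That function vanishes on `[0,T]`, and derivatives within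
`[0,T]` are unique because `T > 0`, so the differential is `0`.
-/

namespace MvPolynomial

variable {𝕜 σ : Type*} [NontriviallyNormedField 𝕜] [Fintype σ]

theorem hasFDerivAt_eval (p : MvPolynomial σ 𝕜) (v : σ → 𝕜) :
    HasFDerivAt (fun w => eval w p)
      (∑ i, eval v (pderiv i p) • (ContinuousLinearMap.proj i : (σ → 𝕜) →L[𝕜] 𝕜)) v := by
  classical
  induction p using induction_on with
  | C a =>
    simp only [eval_C, pderiv_C, map_zero]
    refine (hasFDerivAt_const (𝕜 := 𝕜) a v).congr_fderiv ?_
    ext w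
    simp
  | add p q hp hq =>
    refine ((hp.add hq).congr_fderiv ?_).congr_of_eventuallyEq (.of_eq ?_)
    · ext w
      simp [add_mul, Finset.sum_add_distrib]
    · ext w
      simp
  | mul_X p j hp =>
    refine ((hp.mul (hasFDerivAt_apply j v)).congr_fderiv ?_).congr_of_eventuallyEq
      (.of_eq ?_)
    · ext w
      simp [pderiv_X, Pi.single_apply, apply_ite (eval v), ite_mul, add_mul, mul_assoc,
        Finset.mul_sum, Finset.sum_add_distrib]
    · ext w
      simp

end MvPolynomial

theorem HasDerivWithinAt.mvPolynomial_eval {𝕜 σ : Type*} [NontriviallyNormedField 𝕜]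
    [Fintype σ] {x : 𝕜 → σ → 𝕜} {x' : σ → 𝕜} {s : Set 𝕜} {t : 𝕜}
    (hx : HasDerivWithinAt x x' s t) (p : MvPolynomial σ 𝕜) :
    HasDerivWithinAt (fun u => MvPolynomial.eval (x u) p)
      (∑ i, MvPolynomial.eval (x t) (MvPolynomial.pderiv i p) * x' i) s t := by
  simpa [Function.comp_def] using (p.hasFDerivAt_eval (x t)).comp_hasDerivWithinAt t hx

theorem dHC_sound_general
    {n : Type*} [Fintype n]
    (T : ℝ) (hT : 0 < T)
    (x : ℝ → n → ℝ) (hx : ContDiffOn ℝ 1 x (Set.Icc 0 T))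
    (p : MvPolynomial n ℝ)
    (hzero : ∀ t ∈ Set.Icc 0 T, MvPolynomial.eval (x t) p = 0) :
    ∀ t ∈ Set.Icc 0 T,
      (∑ i, MvPolynomial.eval (x t) (MvPolynomial.pderiv i p) *
        derivWithin (fun s => x s i) (Set.Icc 0 T) t) = 0 := by
  intro t ht
  have hx' : HasDerivWithinAt x (fun i => derivWithin (fun s => x s i) (Set.Icc 0 T) t)
      (Set.Icc 0 T) t :=
    hasDerivWithinAt_pi.2 fun i =>
      (differentiableWithinAt_pi.1 (hx.differentiableOn one_ne_zero t ht) i).hasDerivWithinAt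
  have hconst : HasDerivWithinAt (fun u => MvPolynomial.eval (x u) p) 0 (Set.Icc 0 T) t :=
    (hasDerivWithinAt_const t _ 0).congr hzero (hzero t ht)
  exact (uniqueDiffOn_Icc hT t ht).eq_deriv _ (hx'.mvPolynomial_eval p) hconst

/-- Soundness of the differential hidden constraint axiom (dHC): if a
polynomial `p` vanishes identically along a `C¹` trace `x` on `[0,T]`, then its
chain-rule (syntactic) differential vanishes along the trace as well. -/
theorem dHC_sound
    {n : Type*} [Fintype n] [DecidableEq n]
    (T : ℝ) (hT : 0 < T)
    (x : ℝ → n → ℝ) (hx : ContDiffOn ℝ 1 x (Set.Icc 0 T))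
    (p : MvPolynomial n ℝ)
    (hzero : ∀ t ∈ Set.Icc 0 T, MvPolynomial.eval (x t) p = 0) :
    ∀ t ∈ Set.Icc 0 T,
      (∑ i, MvPolynomial.eval (x t) (MvPolynomial.pderiv i p) *
        derivWithin (fun s => x s i) (Set.Icc 0 T) t) = 0 :=
  dHC_sound_general T hT x hx p hzero
end

section
/- Let n be a finite index type, let T > 0, let A, B : ℝ → Matrix n n ℝ and c : ℝ → (n → ℝ) be continuous on [0,T], and assume det(A(t)) ≠ 0 for all t ∈ [0,T]. Then for every initial value z₀ : n → ℝ there exists a unique continuously differentiable function z : ℝ → (n → ℝ) on [0,T] with z(0) = z₀ satisfying the linear differential-algebraic equation A(t) · z'(t) = B(t) · z(t) + c(t) for all t ∈ [0,T]. -/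
/-!
Multiplying the equation by `A(t)⁻¹`, which is continuous on `[0,T]` because `det A(t) ≠ 0`, turns
it into the linear ODE `z' = A⁻¹B z + A⁻¹c` with coefficients bounded on `[0,T]`. Extending the
coefficients constantly outside `[0,T]`, the vector field `x ↦ F(t) x + g(t)` is globally
Lipschitz with linear growth, so Picard–Lindelöf yields solutions on intervals of a length `h`
independent of the initial value; gluing `⌈T/h⌉` of them gives a solution on `[0,T]`, which is
`C¹` since its derivative is continuous, and unique by Gronwall's inequality.
-/

open Set Matrix

lemma ContinuousLinearMap.lipschitzWith_add_const {E F : Type*} [NormedAddCommGroup E]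
    [NormedSpace ℝ E] [NormedAddCommGroup F] [NormedSpace ℝ F] (φ : E →L[ℝ] F) (y : F) {L : ℝ}
    (hφ : ‖φ‖ ≤ L) :
    LipschitzWith L.toNNReal fun x ↦ φ x + y :=
  (φ.lipschitz.add (LipschitzWith.const y)).weaken
    (by rw [add_zero, ← NNReal.coe_le_coe, coe_nnnorm]; exact hφ.trans (Real.le_coe_toNNReal L))

section IntegralCurve

variable {E : Type*} [NormedAddCommGroup E] [NormedSpace ℝ E] {v : ℝ → E → E} {f g : ℝ → E}
  {s : Set ℝ} {a b c : ℝ}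

lemma IsIntegralCurveOn.piecewise_Icc (hf : IsIntegralCurveOn f v (Icc a b))
    (hg : IsIntegralCurveOn g v (Icc b c)) (hfg : f b = g b) (hab : a ≤ b) (hbc : b ≤ c) :
    IsIntegralCurveOn (fun t ↦ if t ≤ b then f t else g t) v (Icc a c) := by
  set γ := fun t ↦ if t ≤ b then f t else g t
  have hγf : EqOn γ f (Icc a b) := fun t ht ↦ if_pos ht.2
  have hγg : EqOn γ g (Icc b c) := fun t ht ↦ by
    rcases ht.1.eq_or_lt with rfl | hbt
    · exact (if_pos le_rfl).trans hfg
    · exact if_neg hbt.not_ge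
  intro t ht
  rw [← Icc_union_Icc_eq_Icc hab hbc]
  refine HasDerivWithinAt.union ?_ ?_
  · by_cases htab : t ∈ Icc a b
    · rw [hγf htab]
      exact (hf t htab).congr_of_mem hγf htab
    · exact HasFDerivWithinAt.of_notMem_closure (by rwa [closure_Icc])
  · by_cases htbc : t ∈ Icc b c
    · rw [hγg htbc]
      exact (hg t htbc).congr_of_mem hγg htbc
    · exact HasFDerivWithinAt.of_notMem_closure (by rwa [closure_Icc])

lemma exists_isIntegralCurveOn_Icc_of_forall_Icc_add {h : ℝ} (hh : 0 < h)
    (step : ∀ s x₀, ∃ f : ℝ → E, f s = x₀ ∧ IsIntegralCurveOn f v (Icc s (s + h)))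
    (a b : ℝ) (x₀ : E) : ∃ f : ℝ → E, f a = x₀ ∧ IsIntegralCurveOn f v (Icc a b) := by
  have glued : ∀ k : ℕ, ∃ f : ℝ → E, f a = x₀ ∧ IsIntegralCurveOn f v (Icc a (a + k * h)) := by
    intro k
    induction k with
    | zero =>
      obtain ⟨f, hf₀, hf⟩ := step a x₀
      exact ⟨f, hf₀, hf.mono (Icc_subset_Icc_right (by simpa using hh.le))⟩
    | succ k ih =>
      obtain ⟨f, hf₀, hf⟩ := ih
      obtain ⟨g, hg₀, hg⟩ := step (a + k * h) (f (a + k * h))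
      have hk : a ≤ a + k * h := le_add_of_nonneg_right (by positivity)
      refine ⟨fun t ↦ if t ≤ a + k * h then f t else g t, by simp [hk, hf₀], ?_⟩
      convert hf.piecewise_Icc hg hg₀.symm hk (le_add_of_nonneg_right hh.le) using 2
      push_cast
      ring
  obtain ⟨k, hk⟩ := exists_nat_gt ((b - a) / h)
  obtain ⟨f, hf₀, hf⟩ := glued k
  refine ⟨f, hf₀, hf.mono (Icc_subset_Icc_right ?_)⟩
  rw [div_lt_iff₀ hh] at hk
  linarith

lemma IsIntegralCurveOn.hasDerivWithinAt_Ici (hf : IsIntegralCurveOn f v (Icc a b)) {t : ℝ}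
    (ht : t ∈ Ico a b) : HasDerivWithinAt f (v t (f t)) (Ici t) t :=
  (hf t (Ico_subset_Icc_self ht)).mono_of_mem_nhdsWithin (Icc_mem_nhdsGE_of_mem ht)

lemma IsIntegralCurveOn.derivWithin_eq (hf : IsIntegralCurveOn f v s) (hs : UniqueDiffOn ℝ s)
    {t : ℝ} (ht : t ∈ s) : derivWithin f s t = v t (f t) :=
  (hf t ht).derivWithin (hs t ht)

lemma IsIntegralCurveOn.contDiffOn (hf : IsIntegralCurveOn f v s) (hs : UniqueDiffOn ℝ s)
    (hv : ContinuousOn (fun t ↦ v t (f t)) s) : ContDiffOn ℝ 1 f s := by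
  rw [show (1 : WithTop ℕ∞) = 0 + 1 from rfl, contDiffOn_succ_iff_derivWithin hs, contDiffOn_zero]
  exact ⟨fun t ht ↦ (hf t ht).differentiableWithinAt, by simp,
    hv.congr fun t ht ↦ hf.derivWithin_eq hs ht⟩

lemma DifferentiableOn.isIntegralCurveOn_iff_derivWithin_eq (hf : DifferentiableOn ℝ f s)
    (hs : UniqueDiffOn ℝ s) : IsIntegralCurveOn f v s ↔ ∀ t ∈ s, derivWithin f s t = v t (f t) :=
  ⟨fun h _ ht ↦ h.derivWithin_eq hs ht, fun h t ht ↦ h t ht ▸ (hf t ht).hasDerivWithinAt⟩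

end IntegralCurve

section AffineField

variable {E : Type*} [NormedAddCommGroup E] [NormedSpace ℝ E] {F : ℝ → E →L[ℝ] E} {g : ℝ → E}
  {a b : ℝ}

lemma exists_pos_forall_exists_isIntegralCurveOn_Icc_add [CompleteSpace E] (hF : Continuous F)
    (hg : Continuous g) {L K : ℝ} (hFL : ∀ t, ‖F t‖ ≤ L) (hgK : ∀ t, ‖g t‖ ≤ K) :
    ∃ h > 0, ∀ s (x₀ : E), ∃ f : ℝ → E, f s = x₀ ∧
      IsIntegralCurveOn f (fun t x ↦ F t x + g t) (Icc s (s + h)) := by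
  have hL : 0 ≤ L := (norm_nonneg _).trans (hFL 0)
  have hK : 0 ≤ K := (norm_nonneg _).trans (hgK 0)
  -- On the ball of radius `r = ‖x₀‖ + 1 ≥ 1` around `x₀` the field is bounded by `(2L + K) r`,
  -- so a step `h` with `(2L + K) h ≤ 1` keeps Picard–Lindelöf applicable whatever `x₀` is.
  set h := (2 * L + K + 1)⁻¹
  have hh : 0 < h := by positivity
  refine ⟨h, hh, fun s x₀ ↦ ?_⟩
  have hLKh : (2 * L + K) * h ≤ 1 := by
    rw [mul_inv_le_iff₀ (by positivity)]
    linarith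
  set r := ‖x₀‖ + 1
  have hr : 1 ≤ r := le_add_of_nonneg_left (norm_nonneg _)
  have hpl : IsPicardLindelof (fun t x ↦ F t x + g t) (tmin := s) (tmax := s + h)
      ⟨s, left_mem_Icc.2 (by linarith)⟩ x₀ r.toNNReal 0 ((2 * L + K) * r).toNNReal L.toNNReal :=
    { lipschitzOnWith := fun t _ ↦ ((F t).lipschitzWith_add_const (g t) (hFL t)).lipschitzOnWith
      continuousOn := fun x _ ↦ ((hF.clm_apply continuous_const).add hg).continuousOn
      norm_le := fun t _ x hx ↦ by
        rw [Metric.mem_closedBall, Real.coe_toNNReal _ (by positivity)] at hx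
        have hx' : ‖x‖ ≤ 2 * r := by
          linarith [norm_le_norm_add_const_of_dist_le hx]
        rw [Real.coe_toNNReal _ (by positivity)]
        calc ‖F t x + g t‖ ≤ ‖F t‖ * ‖x‖ + ‖g t‖ :=
              (norm_add_le _ _).trans (by grw [(F t).le_opNorm x])
          _ ≤ L * (2 * r) + K * r := by
              gcongr
              · exact hFL t
              · exact (hgK t).trans (le_mul_of_one_le_right hK hr)
          _ = (2 * L + K) * r := by ring
      mul_max_le := by
        rw [Real.coe_toNNReal _ (by positivity), NNReal.coe_zero, sub_zero,
          Real.coe_toNNReal _ (by positivity)]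
        simp only [add_sub_cancel_left, sub_self, max_eq_left hh.le]
        nlinarith }
  exact hpl.exists_eq_forall_mem_Icc_hasDerivWithinAt₀

theorem exists_isIntegralCurveOn_Icc_of_continuousOn [CompleteSpace E] (hab : a ≤ b)
    (hF : ContinuousOn F (Icc a b)) (hg : ContinuousOn g (Icc a b)) (x₀ : E) :
    ∃ f : ℝ → E, f a = x₀ ∧ IsIntegralCurveOn f (fun t x ↦ F t x + g t) (Icc a b) := by
  obtain ⟨L, hL⟩ := isCompact_Icc.exists_bound_of_continuousOn hF
  obtain ⟨K, hK⟩ := isCompact_Icc.exists_bound_of_continuousOn hg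
  obtain ⟨h, hh, step⟩ := exists_pos_forall_exists_isIntegralCurveOn_Icc_add
    (F := IccExtend hab ((Icc a b).domRestrict F)) (g := IccExtend hab ((Icc a b).domRestrict g))
    hF.domRestrict.Icc_extend' hg.domRestrict.Icc_extend'
    (fun t ↦ hL _ (projIcc a b hab t).2) (fun t ↦ hK _ (projIcc a b hab t).2)
  obtain ⟨f, hf₀, hf⟩ := exists_isIntegralCurveOn_Icc_of_forall_Icc_add hh step a b x₀
  refine ⟨f, hf₀, fun t ht ↦ ?_⟩
  simpa [IccExtend_of_mem _ _ ht, domRestrict_apply] using hf t ht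

theorem IsIntegralCurveOn.eqOn_of_continuousOn {f₁ f₂ : ℝ → E} (hF : ContinuousOn F (Icc a b))
    (hf₁ : IsIntegralCurveOn f₁ (fun t x ↦ F t x + g t) (Icc a b))
    (hf₂ : IsIntegralCurveOn f₂ (fun t x ↦ F t x + g t) (Icc a b)) (h : f₁ a = f₂ a) :
    EqOn f₁ f₂ (Icc a b) := by
  obtain ⟨L, hL⟩ := isCompact_Icc.exists_bound_of_continuousOn hF
  exact ODE_solution_unique_of_mem_Icc_right (s := fun _ ↦ univ)
    (fun t ht ↦
      ((F t).lipschitzWith_add_const (g t) (hL t (Ico_subset_Icc_self ht))).lipschitzOnWith)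
    hf₁.continuousOn (fun _ ↦ hf₁.hasDerivWithinAt_Ici) (fun _ _ ↦ mem_univ _)
    hf₂.continuousOn (fun _ ↦ hf₂.hasDerivWithinAt_Ici) (fun _ _ ↦ mem_univ _) h

end AffineField

section Matrix

variable {X : Type*} [TopologicalSpace X] {s : Set X}

lemma ContinuousOn.matrix_mul {l m n R : Type*} [Fintype m] [TopologicalSpace R]
    [NonUnitalNonAssocSemiring R] [IsTopologicalSemiring R] {A : X → Matrix l m R}
    {B : X → Matrix m n R} (hA : ContinuousOn A s) (hB : ContinuousOn B s) :
    ContinuousOn (fun x ↦ A x * B x) s :=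
  continuousOn_iff_continuous_domRestrict.2 (hA.domRestrict.matrix_mul hB.domRestrict)

lemma ContinuousOn.matrix_mulVec {m n R : Type*} [Fintype n] [TopologicalSpace R]
    [NonUnitalNonAssocSemiring R] [IsTopologicalSemiring R] {A : X → Matrix m n R}
    {v : X → n → R} (hA : ContinuousOn A s) (hv : ContinuousOn v s) :
    ContinuousOn (fun x ↦ A x *ᵥ v x) s :=
  continuousOn_iff_continuous_domRestrict.2 (hA.domRestrict.matrix_mulVec hv.domRestrict)

variable {n : Type*} [Fintype n] [DecidableEq n]

lemma Matrix.eq_inv_mulVec_iff_mulVec_eq {α : Type*} [CommRing α] {A : Matrix n n α}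
    (h : IsUnit A.det) {x y : n → α} : x = A⁻¹ *ᵥ y ↔ A *ᵥ x = y := by
  constructor <;> rintro rfl <;> simp [mulVec_mulVec, mul_nonsing_inv _ h, nonsing_inv_mul _ h]

lemma ContinuousOn.matrix_inv {𝕜 : Type*} [Field 𝕜] [TopologicalSpace 𝕜] [IsTopologicalRing 𝕜]
    [ContinuousInv₀ 𝕜] {A : X → Matrix n n 𝕜} (hA : ContinuousOn A s)
    (hdet : ∀ x ∈ s, (A x).det ≠ 0) : ContinuousOn (fun x ↦ (A x)⁻¹) s := fun x hx ↦
  (continuousAt_matrix_inv _ (by rw [Ring.inverse_eq_inv']; exact continuousAt_inv₀ (hdet x hx))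
    ).comp_continuousWithinAt (hA x hx)

lemma ContinuousOn.toContinuousLinearMap_toLin' {𝕜 : Type*} [NontriviallyNormedField 𝕜]
    [CompleteSpace 𝕜] {M : X → Matrix n n 𝕜} (hM : ContinuousOn M s) :
    ContinuousOn (fun x ↦ LinearMap.toContinuousLinearMap (Matrix.toLin' (M x))) s :=
  ((LinearMap.toContinuousLinearMap : ((n → 𝕜) →ₗ[𝕜] n → 𝕜) ≃ₗ[𝕜] _).toLinearMap ∘ₗ
    (Matrix.toLin' : Matrix n n 𝕜 ≃ₗ[𝕜] _).toLinearMap).continuous_of_finiteDimensional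
    |>.comp_continuousOn hM

variable {M : ℝ → Matrix n n ℝ} {g : ℝ → n → ℝ} {a b : ℝ}

theorem exists_contDiffOn_isIntegralCurveOn_mulVec_add (hab : a < b)
    (hM : ContinuousOn M (Icc a b)) (hg : ContinuousOn g (Icc a b)) (x₀ : n → ℝ) :
    ∃ z : ℝ → n → ℝ, ContDiffOn ℝ 1 z (Icc a b) ∧ z a = x₀ ∧
      IsIntegralCurveOn z (fun t x ↦ M t *ᵥ x + g t) (Icc a b) := by
  have hF := hM.toContinuousLinearMap_toLin'
  obtain ⟨z, hz₀, hz⟩ := exists_isIntegralCurveOn_Icc_of_continuousOn hab.le hF hg x₀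
  exact ⟨z, hz.contDiffOn (uniqueDiffOn_Icc hab) ((hF.clm_apply hz.continuousOn).add hg), hz₀, hz⟩

theorem IsIntegralCurveOn.eqOn_of_mulVec_add {z₁ z₂ : ℝ → n → ℝ} (hM : ContinuousOn M (Icc a b))
    (hz₁ : IsIntegralCurveOn z₁ (fun t x ↦ M t *ᵥ x + g t) (Icc a b))
    (hz₂ : IsIntegralCurveOn z₂ (fun t x ↦ M t *ᵥ x + g t) (Icc a b)) (h : z₁ a = z₂ a) :
    EqOn z₁ z₂ (Icc a b) :=
  IsIntegralCurveOn.eqOn_of_continuousOn hM.toContinuousLinearMap_toLin' hz₁ hz₂ h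

lemma isIntegralCurveOn_iff_mulVec_derivWithin_eq {A B : ℝ → Matrix n n ℝ} {c : ℝ → n → ℝ}
    {z : ℝ → n → ℝ} {s : Set ℝ} (hs : UniqueDiffOn ℝ s) (hz : DifferentiableOn ℝ z s)
    (hdet : ∀ t ∈ s, (A t).det ≠ 0) :
    IsIntegralCurveOn z (fun t x ↦ ((A t)⁻¹ * B t) *ᵥ x + (A t)⁻¹ *ᵥ c t) s ↔
      ∀ t ∈ s, A t *ᵥ derivWithin z s t = B t *ᵥ z t + c t := by
  rw [hz.isIntegralCurveOn_iff_derivWithin_eq hs]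
  refine forall₂_congr fun t ht ↦ ?_
  rw [← mulVec_mulVec, ← mulVec_add, eq_inv_mulVec_iff_mulVec_eq (hdet t ht).isUnit]

end Matrix

/-- A linear differential-algebraic equation `A(t) z'(t) = B(t) z(t) + c(t)`
with continuous coefficients and pointwise invertible matrix `A(t)` admits,
for every initial value `z₀`, a unique `C¹` solution on `[0,T]`. -/
theorem linear_dae_existence_uniqueness
    {n : Type*} [Fintype n] [DecidableEq n]
    (T : ℝ) (hT : 0 < T)
    (A B : ℝ → Matrix n n ℝ) (c : ℝ → n → ℝ)
    (hA : ContinuousOn A (Set.Icc 0 T))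
    (hB : ContinuousOn B (Set.Icc 0 T))
    (hc : ContinuousOn c (Set.Icc 0 T))
    (hdet : ∀ t ∈ Set.Icc 0 T, (A t).det ≠ 0)
    (z₀ : n → ℝ) :
    ∃ z : ℝ → n → ℝ,
      (ContDiffOn ℝ 1 z (Set.Icc 0 T) ∧ z 0 = z₀ ∧
        ∀ t ∈ Set.Icc 0 T,
          (A t).mulVec (derivWithin z (Set.Icc 0 T) t) =
            (B t).mulVec (z t) + c t) ∧
      ∀ z₂ : ℝ → n → ℝ,
        (ContDiffOn ℝ 1 z₂ (Set.Icc 0 T) ∧ z₂ 0 = z₀ ∧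
          ∀ t ∈ Set.Icc 0 T,
            (A t).mulVec (derivWithin z₂ (Set.Icc 0 T) t) =
              (B t).mulVec (z₂ t) + c t) →
        Set.EqOn z₂ z (Set.Icc 0 T) := by
  have hs : UniqueDiffOn ℝ (Icc 0 T) := uniqueDiffOn_Icc hT
  have hAinv : ContinuousOn (fun t ↦ (A t)⁻¹) (Icc 0 T) := hA.matrix_inv hdet
  have hDAE (z : ℝ → n → ℝ) (hz : ContDiffOn ℝ 1 z (Icc 0 T)) :=
    isIntegralCurveOn_iff_mulVec_derivWithin_eq (B := B) (c := c) hs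
      (hz.differentiableOn one_ne_zero) hdet
  obtain ⟨z, hz₁, hz₀, hz⟩ := exists_contDiffOn_isIntegralCurveOn_mulVec_add hT
    (hAinv.matrix_mul hB) (hAinv.matrix_mulVec hc) z₀
  refine ⟨z, ⟨hz₁, hz₀, (hDAE z hz₁).1 hz⟩, fun z₂ ⟨hz₂₁, hz₂₀, hz₂⟩ ↦ ?_⟩
  exact ((hDAE z₂ hz₂₁).2 hz₂).eqOn_of_mulVec_add (hAinv.matrix_mul hB) hz (hz₂₀.trans hz₀.symm)
end

section
/- Let n be a natural number and F : (Fin n → ℝ) × (Fin n → ℝ) → (Fin n → ℝ) be continuously differentiable (C¹). Suppose there exist u₀, v₀ : Fin n → ℝ with F(u₀, v₀) = 0 and such that the partial Jacobian of F with respect to its second argument at (u₀, v₀), i.e. the linear map v ↦ D F(u₀,v₀)(0, v) from ℝⁿ to ℝⁿ, is a linear isomorphism. Then there exist open sets U, V ⊆ (Fin n → ℝ) containing u₀ and v₀ respectively, and ε > 0, such that the initial value problem u(0) = u₀, u'(0) = v₀, F(u(t), u'(t)) = 0 for all t ∈ (-ε, ε), admits a solution u of class C² on (-ε, ε) with u(t)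 ∈ U and u'(t) ∈ V for all t ∈ (-ε, ε); moreover this solution is unique among C¹ functions taking values in U with derivative in V that satisfy the same conditions. -/
/-!
By the implicit function theorem, near `(u₀, v₀)` the constraint `F (u, v) = 0` is equivalent to
`v = g u` for a function `g` that is `C¹` near `u₀` with `g u₀ = v₀`. The implicit equation thus
becomes the explicit autonomous ODE `u' = g u`: Picard–Lindelöf gives a local solution, unique
because `g` is locally Lipschitz, and `u' = g ∘ u` with `g` and `u` of class `C¹` makes `u` of
class `C²`.
-/

open Set Filter Topology

theorem ContinuousLinearMap.isInvertible_of_bijective {𝕜 : Type*} [NontriviallyNormedField 𝕜]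
    {E G : Type*} [NormedAddCommGroup E] [NormedSpace 𝕜 E] [CompleteSpace E]
    [NormedAddCommGroup G] [NormedSpace 𝕜 G] [CompleteSpace G]
    {f : E →L[𝕜] G} (hf : Function.Bijective f) : f.IsInvertible :=
  ⟨.ofBijective f (LinearMap.ker_eq_bot.mpr hf.1) (LinearMap.range_eq_top.mpr hf.2), rfl⟩

section

variable {E G : Type*} [NormedAddCommGroup E] [NormedSpace ℝ E]
  [NormedAddCommGroup G] [NormedSpace ℝ G]

theorem ContDiffAt.exists_isOpen_lipschitzOnWith_contDiffOn {g : E → G} {x : E}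
    (hg : ContDiffAt ℝ 1 g x) :
    ∃ O, IsOpen O ∧ x ∈ O ∧ (∃ K, LipschitzOnWith K g O) ∧ ContDiffOn ℝ 1 g O := by
  obtain ⟨K, t, ht, hlip⟩ := hg.exists_lipschitzOnWith
  obtain ⟨s, hs, hC⟩ := hg.contDiffOn le_rfl (by simp)
  obtain ⟨O, hOts, hO, hxO⟩ := mem_nhds_iff.mp (inter_mem ht hs)
  exact ⟨O, hO, hxO, ⟨K, hlip.mono (hOts.trans inter_subset_left)⟩,
    hC.mono (hOts.trans inter_subset_right)⟩

theorem contDiffOn_succ_of_hasDerivAt_comp {g : E → E} {f : ℝ → E} {s : Set ℝ} {O : Set E}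
    (hs : IsOpen s) (hfO : MapsTo f s O) (hf : ∀ t ∈ s, HasDerivAt f (g (f t)) t) {n : ℕ}
    (hg : ContDiffOn ℝ n g O) : ContDiffOn ℝ (n + 1) f s := by
  have hdiff : DifferentiableOn ℝ f s :=
    fun t ht => (hf t ht).differentiableAt.differentiableWithinAt
  have hderiv : EqOn (deriv f) (g ∘ f) s := fun t ht => (hf t ht).deriv
  have step : ∀ k : ℕ, ContDiffOn ℝ k g O → ContDiffOn ℝ k f s → ContDiffOn ℝ (k + 1) f s :=
    fun k hgk hfk => (contDiffOn_succ_iff_deriv_of_isOpen hs).2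
      ⟨hdiff, by simp, (hgk.comp hfk hfO).congr hderiv⟩
  induction n with
  | zero => exact step 0 hg (contDiffOn_zero.2 hdiff.continuousOn)
  | succ k ih => exact step (k + 1) hg (mod_cast ih (hg.of_le (by norm_cast; omega)))

theorem ContDiffAt.exists_hasDerivAt_mem [CompleteSpace E] {g : E → E} {u₀ : E}
    (hg : ContDiffAt ℝ 1 g u₀) {U : Set E} (hU : U ∈ 𝓝 u₀) :
    ∃ ε > 0, ∃ f : ℝ → E, f 0 = u₀ ∧ ∀ t ∈ Ioo (-ε) ε, HasDerivAt f (g (f t)) t ∧ f t ∈ U := by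
  obtain ⟨f, hf0, ε₀, hε₀, hf⟩ :=
    hg.exists_forall_mem_closedBall_exists_eq_forall_mem_Ioo_hasDerivAt₀ 0
  have hIoo : Ioo (0 - ε₀) (0 + ε₀) ∈ 𝓝 (0 : ℝ) := Ioo_mem_nhds (by linarith) (by linarith)
  have hcont : ContinuousAt f 0 := (hf 0 (mem_of_mem_nhds hIoo)).continuousAt
  have hev : ∀ᶠ t in 𝓝 (0 : ℝ), HasDerivAt f (g (f t)) t ∧ f t ∈ U :=
    (eventually_of_mem hIoo hf).and (hcont.preimage_mem_nhds (hf0 ▸ hU))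
  obtain ⟨ε, hε, h⟩ := Metric.eventually_nhds_iff_ball.mp hev
  refine ⟨ε, hε, f, hf0, fun t ht => h t ?_⟩
  rwa [Real.ball_eq_Ioo, zero_sub, zero_add]

theorem ContDiffAt.exists_local_solution_implicit_ode [CompleteSpace E] [CompleteSpace G]
    {F : E × E → G} {u₀ v₀ : E}
    (hF : ContDiffAt ℝ 1 F (u₀, v₀)) (hF0 : F (u₀, v₀) = 0)
    (hJac : (fderiv ℝ F (u₀, v₀) ∘L .inr ℝ E E).IsInvertible) :
    ∃ (U V : Set E), IsOpen U ∧ IsOpen V ∧ u₀ ∈ U ∧ v₀ ∈ V ∧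
      ∃ ε > 0, ∃ u : ℝ → E,
        (ContDiffOn ℝ 2 u (Ioo (-ε) ε) ∧
          u 0 = u₀ ∧ deriv u 0 = v₀ ∧
          (∀ t ∈ Ioo (-ε) ε, F (u t, deriv u t) = 0 ∧ u t ∈ U ∧ deriv u t ∈ V)) ∧
        ∀ u₂ : ℝ → E,
          ContDiffOn ℝ 1 u₂ (Ioo (-ε) ε) →
          u₂ 0 = u₀ → deriv u₂ 0 = v₀ →
          (∀ t ∈ Ioo (-ε) ε, F (u₂ t, deriv u₂ t) = 0 ∧ u₂ t ∈ U ∧ deriv u₂ t ∈ V) →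
          EqOn u₂ u (Ioo (-ε) ε) := by
  set g := hF.implicitFunction one_ne_zero hJac
  have hg : ContDiffAt ℝ 1 g u₀ := hF.contDiffAt_implicitFunction one_ne_zero hJac
  have hg0 : g u₀ = v₀ := hF.implicitFunction_apply_self one_ne_zero hJac
  have hgraph : ∀ᶠ p in 𝓝 (u₀, v₀), F p = 0 ↔ g p.1 = p.2 := by
    simpa only [hF0] using hF.eventually_apply_eq_iff_implicitFunction one_ne_zero hJac
  obtain ⟨U₁, V, hU₁, hu₀U₁, hV, hv₀, hUV⟩ := mem_nhds_prod_iff'.mp hgraph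
  obtain ⟨O, hO, hu₀O, ⟨K, hlip⟩, hgC⟩ := hg.exists_isOpen_lipschitzOnWith_contDiffOn
  set U := (O ∩ U₁) ∩ g ⁻¹' V
  have hU : IsOpen U :=
    (hgC.continuousOn.mono inter_subset_left).isOpen_inter_preimage (hO.inter hU₁) hV
  have hu₀U : u₀ ∈ U := ⟨⟨hu₀O, hu₀U₁⟩, by rwa [mem_preimage, hg0]⟩
  have hsolve : ∀ u ∈ U, ∀ v ∈ V, F (u, v) = 0 ↔ g u = v := fun u hu v hv => hUV ⟨hu.1.2, hv⟩
  obtain ⟨ε, hε, f, hf0, hf⟩ := hg.exists_hasDerivAt_mem (hU.mem_nhds hu₀U)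
  have h0 : (0 : ℝ) ∈ Ioo (-ε) ε := ⟨by linarith, hε⟩
  have hderiv : ∀ t ∈ Ioo (-ε) ε, deriv f t = g (f t) := fun t ht => (hf t ht).1.deriv
  refine ⟨U, V, hU, hV, hu₀U, hv₀, ε, hε, f, ⟨?_, hf0, ?_, fun t ht => ?_⟩, ?_⟩
  · exact contDiffOn_succ_of_hasDerivAt_comp (n := 1) isOpen_Ioo
      (fun t ht => (hf t ht).2.1.1) (fun t ht => (hf t ht).1) hgC
  · rw [hderiv 0 h0, hf0, hg0]
  · obtain ⟨-, hfU⟩ := hf t ht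
    rw [hderiv t ht]
    exact ⟨(hsolve _ hfU _ hfU.2).2 rfl, hfU, hfU.2⟩
  · intro u₂ hu₂ hu₂0 _ hu₂F
    refine ODE_solution_unique_of_mem_Ioo (fun _ _ => hlip.mono fun u hu => hu.1.1) h0
      (fun t ht => ?_) hf (by rw [hu₂0, hf0])
    obtain ⟨hFt, hUt, hVt⟩ := hu₂F t ht
    have hdiff : DifferentiableAt ℝ u₂ t :=
      (hu₂.differentiableOn one_ne_zero t ht).differentiableAt (isOpen_Ioo.mem_nhds ht)
    exact ⟨(hsolve _ hUt _ hVt).1 hFt ▸ hdiff.hasDerivAt, hUt⟩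

end

/-- Local solution of an implicit ODE: if `F` is `C¹`, `F (u₀, v₀) = 0` and
the partial Jacobian of `F` with respect to its second argument at `(u₀, v₀)`
is a linear isomorphism, then there are open neighborhoods `U ∋ u₀`, `V ∋ v₀`
and `ε > 0` such that the initial value problem
`u 0 = u₀`, `u' 0 = v₀`, `F (u t, u' t) = 0` on `(-ε, ε)` has a `C²` solution
staying in `U` with derivative in `V`, unique among such `C¹` solutions. -/
theorem implicit_ode_local_solution
    (n : ℕ) (F : (Fin n → ℝ) × (Fin n → ℝ) → (Fin n → ℝ))
    (hF : ContDiff ℝ 1 F)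
    (u₀ v₀ : Fin n → ℝ) (hF0 : F (u₀, v₀) = 0)
    (hJac : Function.Bijective (fun v : Fin n → ℝ => fderiv ℝ F (u₀, v₀) (0, v))) :
    ∃ (U V : Set (Fin n → ℝ)), IsOpen U ∧ IsOpen V ∧ u₀ ∈ U ∧ v₀ ∈ V ∧
      ∃ ε > 0, ∃ u : ℝ → Fin n → ℝ,
        (ContDiffOn ℝ 2 u (Set.Ioo (-ε) ε) ∧
          u 0 = u₀ ∧ deriv u 0 = v₀ ∧
          (∀ t ∈ Set.Ioo (-ε) ε,
            F (u t, deriv u t) = 0 ∧ u t ∈ U ∧ deriv u t ∈ V)) ∧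
        ∀ u₂ : ℝ → Fin n → ℝ,
          ContDiffOn ℝ 1 u₂ (Set.Ioo (-ε) ε) →
          u₂ 0 = u₀ → deriv u₂ 0 = v₀ →
          (∀ t ∈ Set.Ioo (-ε) ε,
            F (u₂ t, deriv u₂ t) = 0 ∧ u₂ t ∈ U ∧ deriv u₂ t ∈ V) →
          Set.EqOn u₂ u (Set.Ioo (-ε) ε) :=
  hF.contDiffAt.exists_local_solution_implicit_ode hF0
    (ContinuousLinearMap.isInvertible_of_bijective hJac)
end

section
/- Let T > 0 and let x, y, z : ℝ → ℝ be continuously differentiable on [0,T] satisfying, for all t ∈ [0,T]: x'(t) = -y(t), x(t)·y(t) = 1, and z'(t) = -(y(t))²·z(t)/2, with initial conditions x(0) = 1, y(0) = 1, z(0) = 1. Then z(t)²·y(t) = 1 for all t ∈ [0,T]; in particular y(t) > 0 for all t ∈ [0,T]. -/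
/-!
The algebraic constraint `x·y = 1` makes `y = x⁻¹`, so `y` inherits a derivative from `x`, and
`x' = -y` gives the hidden constraint `y' = -x'·y² = y³`. Along the ghost `z' = -y²z/2` the
derivative of `z²·y` is `-y²z²·y + z²·y³ = 0`, so `z²·y` keeps its initial value `1`; as `z² ≥ 0`,
this forces `y > 0`.
-/

open Set

theorem HasDerivWithinAt.of_mul_eq_one {𝕜 : Type*} [NontriviallyNormedField 𝕜]
    {x y : 𝕜 → 𝕜} {x' t : 𝕜} {s : Set 𝕜} (hx : HasDerivWithinAt x x' s t)
    (hxy : ∀ u ∈ s, x u * y u = 1) (ht : t ∈ s) :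
    HasDerivWithinAt y (-x' * y t ^ 2) s t := by
  have hy : ∀ u ∈ s, y u = (x u)⁻¹ := fun u hu => eq_inv_of_mul_eq_one_right (hxy u hu)
  have hxt : x t ≠ 0 := left_ne_zero_of_mul_eq_one (hxy t ht)
  refine ((hx.inv hxt).congr hy (hy t ht)).congr_deriv ?_
  rw [hy t ht, inv_pow, div_eq_mul_inv]

theorem Convex.eq_of_hasDerivWithinAt_zero {f : ℝ → ℝ} {s : Set ℝ} (hs : Convex ℝ s)
    (hf : ∀ t ∈ s, HasDerivWithinAt f 0 s t) {a b : ℝ} (ha : a ∈ s) (hb : b ∈ s) :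
    f b = f a := by
  have := hs.norm_image_sub_le_of_norm_hasDerivWithin_le hf (fun _ _ => norm_zero.le) ha hb
  simpa only [zero_mul, norm_le_zero_iff, sub_eq_zero] using this

theorem example_safety_general
    (T : ℝ) (hT : 0 < T)
    (x y z : ℝ → ℝ)
    (hx : ContDiffOn ℝ 1 x (Set.Icc 0 T))
    (hz : ContDiffOn ℝ 1 z (Set.Icc 0 T))
    (hx' : ∀ t ∈ Set.Icc 0 T, derivWithin x (Set.Icc 0 T) t = -y t)
    (hxy : ∀ t ∈ Set.Icc 0 T, x t * y t = 1)
    (hz' : ∀ t ∈ Set.Icc 0 T,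
      derivWithin z (Set.Icc 0 T) t = -(y t) ^ 2 * z t / 2)
    (hy0 : y 0 = 1) (hz0 : z 0 = 1) :
    (∀ t ∈ Set.Icc 0 T, z t ^ 2 * y t = 1) ∧
    (∀ t ∈ Set.Icc 0 T, 0 < y t) := by
  have hX : ∀ t ∈ Icc 0 T, HasDerivWithinAt x (-y t) (Icc 0 T) t := fun t ht =>
    hx' t ht ▸ (hx.differentiableOn one_ne_zero t ht).hasDerivWithinAt
  have hY : ∀ t ∈ Icc 0 T, HasDerivWithinAt y (y t ^ 3) (Icc 0 T) t := fun t ht => by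
    refine ((hX t ht).of_mul_eq_one hxy ht).congr_deriv ?_
    ring
  have hZ : ∀ t ∈ Icc 0 T, HasDerivWithinAt z (-(y t) ^ 2 * z t / 2) (Icc 0 T) t := fun t ht =>
    hz' t ht ▸ (hz.differentiableOn one_ne_zero t ht).hasDerivWithinAt
  have hinvariant : ∀ t ∈ Icc 0 T, HasDerivWithinAt (fun s => z s ^ 2 * y s) 0 (Icc 0 T) t :=
    fun t ht => by
      refine (((hZ t ht).pow 2).mul (hY t ht)).congr_deriv ?_
      rw [Pi.pow_apply]; ring
  have hconst : ∀ t ∈ Icc 0 T, z t ^ 2 * y t = 1 := fun t ht => by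
    simpa [hy0, hz0] using
      (convex_Icc 0 T).eq_of_hasDerivWithinAt_zero hinvariant (left_mem_Icc.2 hT.le) ht
  exact ⟨hconst, fun t ht =>
    pos_of_mul_pos_right (by rw [hconst t ht]; exact one_pos) (sq_nonneg (z t))⟩

/-- Safety property of Example 1: along any `C¹` trace of the augmented system
`x' = -y ∧ x·y = 1 ∧ z' = -y²·z/2` started at `x = y = z = 1`, the quantity
`z²·y` is a differential invariant equal to `1`; in particular `y > 0`. -/
theorem example_safety
    (T : ℝ) (hT : 0 < T)
    (x y z : ℝ → ℝ)
    (hx : ContDiffOn ℝ 1 x (Set.Icc 0 T))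
    (hy : ContDiffOn ℝ 1 y (Set.Icc 0 T))
    (hz : ContDiffOn ℝ 1 z (Set.Icc 0 T))
    (hx' : ∀ t ∈ Set.Icc 0 T, derivWithin x (Set.Icc 0 T) t = -y t)
    (hxy : ∀ t ∈ Set.Icc 0 T, x t * y t = 1)
    (hz' : ∀ t ∈ Set.Icc 0 T,
      derivWithin z (Set.Icc 0 T) t = -(y t) ^ 2 * z t / 2)
    (hx0 : x 0 = 1) (hy0 : y 0 = 1) (hz0 : z 0 = 1) :
    (∀ t ∈ Set.Icc 0 T, z t ^ 2 * y t = 1) ∧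
    (∀ t ∈ Set.Icc 0 T, 0 < y t) :=
  example_safety_general T hT x y z hx hz hx' hxy hz' hy0 hz0
end
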